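/- If (D, F) is a faithful and consistent classical-deterministic causal model, then D is a siblings-on-cycles graph, i.e., every directed cycle in D contains two vertices u and v (lying on the cycle) that share a common parent in D. -/

import Mathlib

set_option autoImplicit false

/-- A function `f` on a dependent product depends only on the coordinates in `S`:
its value is unchanged when the argument is modified outside of `S`. -/
def DependsOnlyOn {V : Type} {O : V → Type} {α : Type} (f : (∀ v, O v) → α) (S : Set V) : Prop :=
  ∀ o o' : ∀ v, O v, (∀ v ∈ S, o v = o' v) → f o = f o'

/-- A function `f` on a dependent product depends nontrivially on the coordinate `ℓ`:
there are two arguments that differ only at `ℓ` and get assigned different values. -/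
def DependsOnCoord {V : Type} {O : V → Type} {α : Type} (f : (∀ v, O v) → α) (ℓ : V) : Prop :=
  ∃ o o' : ∀ v, O v, (∀ k, k ≠ ℓ → o k = o' k) ∧ f o ≠ f o'

/-- `c` is a directed cycle (of length `n`, with pairwise distinct vertices) in the
digraph with edge relation `E`. -/
def IsDirCycle {V : Type} (E : V → V → Prop) {n : ℕ} (c : ZMod n → V) : Prop :=
  0 < n ∧ Function.Injective c ∧ ∀ i, E (c i) (c (i + 1))

/-- The directed cycle `c` has a chord: an edge `c i → c j` with `j ≠ i + 1 (mod n)`. -/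
def HasChord {V : Type} (E : V → V → Prop) {n : ℕ} (c : ZMod n → V) : Prop :=
  ∃ i j : ZMod n, E (c i) (c j) ∧ j ≠ i + 1

/-- A digraph is a siblings-on-cycles graph if every directed cycle contains two
(distinct) vertices that share a common parent. -/
def SiblingsOnCycles {V : Type} (E : V → V → Prop) : Prop :=
  ∀ (n : ℕ) (c : ZMod n → V), IsDirCycle E c →
    ∃ i j : ZMod n, i ≠ j ∧ ∃ p, E p (c i) ∧ E p (c j)

open Classical in
/-- The deterministic correlation `p(a|x) = [g(x) = a]` induced by a function `g`. -/
noncomputable def detCorr {V : Type} {X A : V → Type} (g : (∀ v, X v) → ∀ v, A v) :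
    (∀ v, X v) → (∀ v, A v) → ℝ :=
  fun x a => if a = g x then 1 else 0

/-- A classical-deterministic causal model: a finite vertex set `V`, a digraph `E`
(the causal structure), finite nonempty output- and input-sets `O v`, `I v`, and the
model parameters `ω v : (∀ ℓ, O ℓ) → I v`.  (That `ω v` only depends on the
coordinates of the parents of `v` is expressed by `StructComp` below.) -/
structure CDModel where
  V : Type
  [fintV : Fintype V]
  [decV : DecidableEq V]
  E : V → V → Prop
  O : V → Type
  I : V → Type
  [fintO : ∀ v, Fintype (O v)]
  [neO : ∀ v, Nonempty (O v)]
  [fintI : ∀ v, Fintype (I v)]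
  [neI : ∀ v, Nonempty (I v)]
  ω : ∀ v, (∀ ℓ, O ℓ) → I v

attribute [instance] CDModel.fintV CDModel.decV CDModel.fintO CDModel.neO CDModel.fintI CDModel.neI

namespace CDModel

variable (M : CDModel)

/-- The parents of `v`. -/
def Pa (v : M.V) : Set M.V := {k | M.E k v}

/-- The children of `s`. -/
def Ch (s : M.V) : Set M.V := {v | M.E s v}

/-- A source vertex: a vertex without parents. -/
def IsSource (s : M.V) : Prop := ∀ k, ¬ M.E k s

/-- The digraph `E` is a causal structure for the model parameters, i.e. each `ω v`
is a function of the outputs of the parents of `v` only. -/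
def StructComp : Prop := ∀ v, DependsOnlyOn (M.ω v) (M.Pa v)

/-- Faithfulness: each `ω v` depends nontrivially on each of the parents of `v`. -/
def Faithful : Prop := ∀ ℓ v, M.E ℓ v → DependsOnCoord (M.ω v) ℓ

open Classical in
/-- `g` witnesses the consistency condition for the interventions `μ`: for all
settings `x` and results `a`, the number of pairs `(i, o)` with `ω v o = i v` and
`μ v (x v, i v) = (a v, o v)` (for all `v`) is `1` if `a = g x` and `0` otherwise. -/
def IsWitness (X A : M.V → Type) (μ : ∀ v, X v × M.I v → A v × M.O v)
    (g : (∀ v, X v) → ∀ v, A v) : Prop :=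
  ∀ (x : ∀ v, X v) (a : ∀ v, A v),
    Nat.card {io : (∀ v, M.I v) × (∀ v, M.O v) //
      (∀ v, M.ω v io.2 = io.1 v) ∧ ∀ v, μ v (x v, io.1 v) = (a v, io.2 v)} =
    if a = g x then 1 else 0

/-- Consistency: every family of interventions admits a witnessing function `g`. -/
def Consistent : Prop :=
  ∀ (X A : M.V → Type)
    (_ : ∀ v, Fintype (X v)) (_ : ∀ v, Nonempty (X v))
    (_ : ∀ v, Fintype (A v)) (_ : ∀ v, Nonempty (A v))
    (μ : ∀ v, X v × M.I v → A v × M.O v),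
    ∃ g : (∀ v, X v) → ∀ v, A v, M.IsWitness X A μ g

/-- Extend an assignment of outputs on `V ∖ {s}` to all of `V` by putting `os` at `s`. -/
def extendAt (s : M.V) (os : M.O s) (o : ∀ v : {v : M.V // v ≠ s}, M.O v.1) (ℓ : M.V) :
    M.O ℓ :=
  if h : ℓ = s then cast (congrArg M.O h.symm) os else o ⟨ℓ, h⟩

/-- The reduced causal model obtained by fixing the output `os` of the source `s`:
the vertex `s` and all its incident edges are removed, and each model parameter is
partially applied at the coordinate `s` (which keeps `ω v` unchanged for non-children
of `s`). -/
def reduce (s : M.V) (os : M.O s) : CDModel where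
  V := {v : M.V // v ≠ s}
  E := fun a b => M.E a.1 b.1
  O := fun v => M.O v.1
  I := fun v => M.I v.1
  ω := fun v o => M.ω v.1 (M.extendAt s os o)

/-- The dependency graph of the model parameters: edge `ℓ → v` iff `ω v` depends
nontrivially on its `O ℓ`-coordinate. -/
def depGraph : M.V → M.V → Prop := fun ℓ v => DependsOnCoord (M.ω v) ℓ

/-- Replace the causal structure by the dependency graph of the model parameters. -/
def restrictDep : CDModel where
  V := M.V
  E := M.depGraph
  O := M.O
  I := M.I
  ω := M.ω

/-- One step of the flow: fix an output value of a source, pass to the reduced model,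
and restrict its causal structure to the dependency graph of the reduced parameters. -/
def flowStep (s : M.V) (os : M.O s) : CDModel := (M.reduce s os).restrictDep

end CDModel

/-- Reachability of one causal model from another by a finite sequence of flow steps,
each fixing an output value of a source vertex of the current causal structure. -/
inductive Reaches : CDModel → CDModel → Prop where
  | refl (M : CDModel) : Reaches M M
  | tail {M N : CDModel} (s : M.V) (hs : M.IsSource s) (os : M.O s)
      (h : Reaches (M.flowStep s os) N) : Reaches M N

/-- Causal correlations, defined recursively: a family of correlations on at most one
agent is causal; and a correlation is causal if it decomposes as a convex combination
over a first agent `v` of a local conditional distribution for `v` times correlations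
for the remaining agents (depending on `v`'s setting and result) that are again causal. -/
inductive IsCausal : ∀ (S : Type) (X A : S → Type), ((∀ v, X v) → (∀ v, A v) → ℝ) → Prop where
  | base {S : Type} [Fintype S] {X A : S → Type}
      (p : (∀ v, X v) → (∀ v, A v) → ℝ) (h : Fintype.card S ≤ 1) : IsCausal S X A p
  | step {S : Type} [Fintype S] [DecidableEq S] {X A : S → Type} [∀ v, Fintype (A v)]
      (p : (∀ v, X v) → (∀ v, A v) → ℝ)
      (q : S → ℝ) (hq0 : ∀ v, 0 ≤ q v) (hq1 : ∑ v, q v = 1)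
      (pv : ∀ v : S, X v → A v → ℝ)
      (hpv0 : ∀ v x a, 0 ≤ pv v x a) (hpv1 : ∀ v x, ∑ a, pv v x a = 1)
      (pr : ∀ v : S, X v → A v →
        (∀ u : {u : S // u ≠ v}, X u.1) → (∀ u : {u : S // u ≠ v}, A u.1) → ℝ)
      (hpr : ∀ v xv av, IsCausal {u : S // u ≠ v} (fun u => X u.1) (fun u => A u.1) (pr v xv av))
      (hdec : ∀ x a, p x a =
        ∑ v, q v * pv v (x v) (a v) * pr v (x v) (a v) (fun u => x u.1) (fun u => a u.1)) :
      IsCausal S X A p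

/-- Convenience constructor for classical-deterministic causal models. -/
abbrev mkModel (V : Type) [Fintype V] [DecidableEq V] (E : V → V → Prop) (O I : V → Type)
    [∀ v, Fintype (O v)] [∀ v, Nonempty (O v)] [∀ v, Fintype (I v)] [∀ v, Nonempty (I v)]
    (ω : ∀ v, (∀ ℓ, O ℓ) → I v) : CDModel :=
  { V := V, E := E, O := O, I := I, ω := ω }

/-!
Suppose a directed cycle `c₀ → c₁ → ⋯` has no two vertices with a common parent. Then every
vertex is a parent of at most one `cᵢ`, so the faithfulness witnesses for the edges
`cᵢ₋₁ → cᵢ` can be glued into two global output assignments `o ≠ o'` which differ only on the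
cycle and produce different inputs at every cycle vertex. The intervention that outputs
`o v` on input `ω v o` and `o' v` otherwise then has both `o` and `o'` as self-consistent
solutions, whereas consistency demands exactly one.
-/

namespace CDModel

variable {M : CDModel}

theorem Consistent.eq_of_fixedPoints (hM : M.Consistent) (φ : ∀ v, M.I v → M.O v)
    {o o' : ∀ v, M.O v} (ho : ∀ v, φ v (M.ω v o) = o v) (ho' : ∀ v, φ v (M.ω v o') = o' v) :
    o = o' := by
  obtain ⟨g, hg⟩ := hM (fun _ => PUnit) (fun _ => PUnit) (fun _ => inferInstance)
    (fun _ => inferInstance) (fun _ => inferInstance) (fun _ => inferInstance)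
    (fun v xi => (PUnit.unit, φ v xi.2))
  have hcard := hg (fun _ => PUnit.unit) (g fun _ => PUnit.unit)
  rw [if_pos rfl] at hcard
  have hsub := (Nat.card_eq_one_iff_unique.mp hcard).1
  exact congrArg (fun io => io.1.2)
    (hsub.elim ⟨(fun v => M.ω v o, o), fun _ => rfl, fun v => Prod.ext rfl (ho v)⟩
      ⟨(fun v => M.ω v o', o'), fun _ => rfl, fun v => Prod.ext rfl (ho' v)⟩)

theorem Consistent.eq_of_forall_ne_imp_ω_ne (hM : M.Consistent) {o o' : ∀ v, M.O v}
    (h : ∀ v, o v ≠ o' v → M.ω v o ≠ M.ω v o') : o = o' := by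
  classical
  refine hM.eq_of_fixedPoints (fun v j => if j = M.ω v o then o v else o' v)
    (fun v => if_pos rfl) fun v => ?_
  by_cases hv : o v = o' v
  · split_ifs <;> simp [hv]
  · exact if_neg (h v hv).symm

theorem StructComp.ω_glue_eq (hM : M.StructComp) {n : ℕ} (c : ZMod n → M.V)
    (s : M.V → ZMod n) (hs : ∀ v i, M.E v (c i) → s v = i - 1) (o : ZMod n → ∀ v, M.O v)
    (j : ZMod n) : M.ω (c j) (fun v => o (s v) v) = M.ω (c j) (o (j - 1)) :=
  hM (c j) _ _ fun v hv => by rw [hs v j hv]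

theorem exists_ne_forall_ne_imp_ω_ne (hstruct : M.StructComp) (hfaith : M.Faithful) {n : ℕ}
    (c : ZMod n → M.V) (hc : ∀ i, M.E (c i) (c (i + 1)))
    (hsib : ∀ i j p, M.E p (c i) → M.E p (c j) → i = j) :
    ∃ o o' : ∀ v, M.O v, o ≠ o' ∧ ∀ v, o v ≠ o' v → M.ω v o ≠ M.ω v o' := by
  have hidx : ∀ v, ∃ k : ZMod n, ∀ i, M.E v (c i) → k = i - 1 := by
    intro v
    by_cases hv : ∃ i, M.E v (c i)
    · obtain ⟨i, hi⟩ := hv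
      exact ⟨i - 1, fun j hj => by rw [hsib i j v hi hj]⟩
    · exact ⟨0, fun i hi => absurd ⟨i, hi⟩ hv⟩
  choose s hs using hidx
  choose o o' hagree hne using fun i => hfaith _ _ (hc i)
  have hcyc : ∀ j, M.ω (c j) (fun v => o (s v) v) ≠ M.ω (c j) (fun v => o' (s v) v) := by
    intro j
    rw [hstruct.ω_glue_eq c s hs o, hstruct.ω_glue_eq c s hs o']
    have hdiff := hne (j - 1)
    rwa [sub_add_cancel] at hdiff
  refine ⟨fun v => o (s v) v, fun v => o' (s v) v, fun h => hcyc 0 (congrArg _ h), ?_⟩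
  intro v hv
  have hv_cyc : v = c (s v) := by_contra fun h => hv (hagree (s v) v h)
  have hdiff := hcyc (s v)
  rwa [← hv_cyc] at hdiff

end CDModel

/-- **Admissibility.**
If `(D, F)` is a faithful and consistent classical-deterministic causal model, then
`D` is a siblings-on-cycles graph: every directed cycle of `D` contains two vertices
that share a common parent in `D`. -/
theorem stmt3 (M : CDModel) (hstruct : M.StructComp) (hcons : M.Consistent)
    (hfaith : M.Faithful) :
    SiblingsOnCycles M.E := by
  intro n c hc
  by_contra hno
  push Not at hno
  have hsib : ∀ i j p, M.E p (c i) → M.E p (c j) → i = j :=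
    fun i j p hi hj => by_contra fun hij => hno i j hij p hi hj
  obtain ⟨o, o', hne, h⟩ :=
    CDModel.exists_ne_forall_ne_imp_ω_ne hstruct hfaith c hc.2.2 hsib
  exact hne (hcons.eq_of_forall_ne_imp_ω_ne h)
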